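/- arXiv:2304.02985 — 4 statements merged into one kernel-verified Lean document; each statement's English description precedes it below -/
import Mathlib

section
/- Let π be an interval partition of {1,…,2r} and let ρ = {(1,2),(3,4),…,(2r−1,2r)} be the standard pair matching. Then the join π ∨ ρ equals the one-block partition 1̂_{2r} if and only if for every i ∈ {1,…,r−1}, the elements 2i and 2i+1 lie in the same block of π. Consequently the set {π ∈ I(2r) : π ∨ ρ = 1̂_{2r}} is the interval [σ, 1̂_{2r}] in the lattice I(2r), where σ = {(1),(2,3),(4,5),…,(2r−2,2r−1),(2r)}, and this interval is lattice-isomorphic to I(r+1). -/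
/-!
If the interval partition `π` separates some `2i` from `2i + 1` (1-indexed), then `π` refines
the cut between them, and so does the pair matching `ρ`; hence `π ∨ ρ` is not `1̂`. Conversely,
`σ ∨ ρ = 1̂` because every two consecutive elements are paired by `σ` or by `ρ`. Partitions
above `σ` are the pullbacks of partitions of the `r + 1` blocks of `σ`, and pulling back along
the monotone block map and a monotone choice of representatives preserves interval partitions.
-/

/-- A setoid on a linearly ordered type is an *interval partition* if its classes are
intervals of consecutive elements. -/
def IsIntervalSetoid {n : ℕ} (π : Setoid (Fin n)) : Prop :=
  ∀ a b c : Fin n, a ≤ b → b ≤ c → π.r a c → π.r a b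

open Function

section IntervalSetoid

variable {m n : ℕ}

theorem IsIntervalSetoid.rel_of_le_of_le {π : Setoid (Fin n)} (hπ : IsIntervalSetoid π)
    {a b c d : Fin n} (had : π a d) (hab : a ≤ b) (hbc : b ≤ c) (hcd : c ≤ d) : π b c :=
  π.trans (π.symm (hπ a b d hab (hbc.trans hcd) had)) (hπ a c d (hab.trans hbc) hcd had)

theorem IsIntervalSetoid.comap {π : Setoid (Fin n)} (hπ : IsIntervalSetoid π)
    {f : Fin m → Fin n} (hf : Monotone f) : IsIntervalSetoid (π.comap f) :=
  fun _ _ _ hab hbc h => hπ _ _ _ (hf hab) (hf hbc) h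

theorem IsIntervalSetoid.le_ker_le_of_not_rel {π : Setoid (Fin n)} (hπ : IsIntervalSetoid π)
    {x y : Fin n} (hxy : x.val + 1 = y.val) (hnot : ¬ π x y) :
    π ≤ Setoid.ker (· ≤ x) := by
  have hcut : ∀ a b, π a b → a ≤ x → b ≤ x := fun a b hab ha => by
    by_contra! hb
    exact hnot (hπ.rel_of_le_of_le hab ha (Fin.le_def.2 (by omega)) (Fin.le_def.2 (by omega)))
  intro a b hab
  rw [Setoid.ker_def, eq_iff_iff]
  exact ⟨hcut a b hab, hcut b a (π.symm hab)⟩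

theorem Setoid.eq_top_of_rel_of_val_add_one_eq {s : Setoid (Fin n)}
    (h : ∀ x y : Fin n, x.val + 1 = y.val → s x y) : s = ⊤ := by
  suffices hzero : ∀ k (hk : k < n), s ⟨0, by omega⟩ ⟨k, hk⟩ by
    refine Setoid.eq_top_iff.2 fun x y => ?_
    exact s.trans (s.symm (hzero x.val x.isLt)) (hzero y.val y.isLt)
  intro k hk
  induction k with
  | zero => exact s.refl _
  | succ k ih => exact s.trans (ih (by omega)) (h _ _ rfl)

end IntervalSetoid

section PairMatching

variable {n : ℕ}

/- In 0-indexed terms, `pairMatching` is `ρ = {(0,1),(2,3),…}` and `shiftedPairMatching` is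
`σ = {(0),(1,2),(3,4),…}`. -/
def pairMatching (n : ℕ) : Setoid (Fin n) := Setoid.ker fun x => x.val / 2

def shiftedPairMatching (n : ℕ) : Setoid (Fin n) := Setoid.ker fun x => (x.val + 1) / 2

theorem pairMatching_rel {x y : Fin n} : pairMatching n x y ↔ x.val / 2 = y.val / 2 := Iff.rfl

theorem shiftedPairMatching_rel {x y : Fin n} :
    shiftedPairMatching n x y ↔ (x.val + 1) / 2 = (y.val + 1) / 2 := Iff.rfl

theorem pairMatching_le_ker_le {x : Fin n} (hx : Odd x.val) :
    pairMatching n ≤ Setoid.ker (· ≤ x) := by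
  obtain ⟨k, hk⟩ := hx
  intro a b hab
  rw [pairMatching_rel] at hab
  rw [Setoid.ker_def, eq_iff_iff, Fin.le_def, Fin.le_def]
  omega

theorem shiftedPairMatching_sup_pairMatching : shiftedPairMatching n ⊔ pairMatching n = ⊤ := by
  refine Setoid.eq_top_of_rel_of_val_add_one_eq fun x y hxy => ?_
  rcases Nat.even_or_odd x.val with ⟨k, hk⟩ | ⟨k, hk⟩
  · exact le_sup_right (a := shiftedPairMatching n) (pairMatching_rel.2 (by omega))
  · exact le_sup_left (b := pairMatching n) (shiftedPairMatching_rel.2 (by omega))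

theorem IsIntervalSetoid.rel_of_sup_pairMatching_eq_top {π : Setoid (Fin n)}
    (hπ : IsIntervalSetoid π) (htop : π ⊔ pairMatching n = ⊤) {x y : Fin n}
    (hxy : x.val + 1 = y.val) (hx : Odd x.val) : π x y := by
  by_contra hnot
  have hcut : π ⊔ pairMatching n ≤ Setoid.ker (· ≤ x) :=
    sup_le (hπ.le_ker_le_of_not_rel hxy hnot) (pairMatching_le_ker_le hx)
  have hsplit : (x ≤ x) = (y ≤ x) := hcut (htop ▸ trivial : (π ⊔ pairMatching n) x y)
  rw [eq_iff_iff, Fin.le_def, Fin.le_def] at hsplit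
  omega

theorem IsIntervalSetoid.sup_pairMatching_eq_top_iff {π : Setoid (Fin n)}
    (hπ : IsIntervalSetoid π) : π ⊔ pairMatching n = ⊤ ↔ shiftedPairMatching n ≤ π := by
  refine ⟨fun htop x y hxy => ?_, fun hσ => top_unique ?_⟩
  · rw [shiftedPairMatching_rel] at hxy
    rcases lt_trichotomy x.val y.val with hlt | heq | hgt
    · exact hπ.rel_of_sup_pairMatching_eq_top htop (by omega) (Nat.odd_iff.2 (by omega))
    · exact Fin.ext heq ▸ π.refl x
    · exact π.symm (hπ.rel_of_sup_pairMatching_eq_top htop (by omega) (Nat.odd_iff.2 (by omega)))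
  · exact shiftedPairMatching_sup_pairMatching.symm.le.trans (sup_le_sup_right hσ _)

end PairMatching

section Comap

variable {α β : Type*} {f : β → α} {g : α → β}

theorem Setoid.comap_comap_eq_self_of_ker_le (hgf : LeftInverse g f) {π : Setoid α}
    (h : Setoid.ker g ≤ π) : (π.comap f).comap g = π := by
  have hrep : ∀ x, π x (f (g x)) := fun x => h (hgf (g x)).symm
  ext x y
  exact ⟨fun hxy => π.trans (hrep x) (π.trans hxy (π.symm (hrep y))),
    fun hxy => π.trans (π.symm (hrep x)) (π.trans hxy (hrep y))⟩

theorem Setoid.comap_comap_eq_self_of_leftInverse (hgf : LeftInverse g f) (τ : Setoid β) :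
    (τ.comap g).comap f = τ := by
  rw [← Setoid.comap_comp, hgf.comp_eq_id, Setoid.comap_id]

end Comap

section OrderIso

variable {m n : ℕ}

def intervalSetoidOrderIsoOfLeftInverse {f : Fin n → Fin m} {g : Fin m → Fin n}
    (hf : Monotone f) (hg : Monotone g) (hgf : LeftInverse g f) :
    {π : Setoid (Fin m) // IsIntervalSetoid π ∧ Setoid.ker g ≤ π} ≃o
      {τ : Setoid (Fin n) // IsIntervalSetoid τ} where
  toFun π := ⟨π.1.comap f, π.2.1.comap hf⟩
  invFun τ := ⟨τ.1.comap g, τ.2.comap hg, fun x y hxy =>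
    (Setoid.ker_def.1 hxy ▸ τ.1.refl (g x) : τ.1 (g x) (g y))⟩
  left_inv π := Subtype.ext (Setoid.comap_comap_eq_self_of_ker_le hgf π.2.2)
  right_inv τ := Subtype.ext (Setoid.comap_comap_eq_self_of_leftInverse hgf τ.1)
  map_rel_iff' {π π'} := by
    show π.1.comap f ≤ π'.1.comap f ↔ π.1 ≤ π'.1
    refine ⟨fun h => ?_, fun h _ _ hxy => h hxy⟩
    rw [← Setoid.comap_comap_eq_self_of_ker_le hgf π.2.2,
      ← Setoid.comap_comap_eq_self_of_ker_le hgf π'.2.2]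
    exact fun _ _ hxy => h hxy

end OrderIso

section ShiftedPairBlocks

variable {n : ℕ}

def shiftedPairIndex (n : ℕ) (x : Fin (2 * n)) : Fin (n + 1) := ⟨(x.val + 1) / 2, by omega⟩

/-- At `i = 0` the truncated subtraction gives `0`, the singleton block of `σ`. -/
def shiftedPairSection (hn : 0 < n) (i : Fin (n + 1)) : Fin (2 * n) :=
  ⟨2 * i.val - 1, by omega⟩

theorem shiftedPairIndex_monotone : Monotone (shiftedPairIndex n) := fun x y hxy => by
  rw [Fin.le_def] at hxy ⊢
  exact Nat.div_le_div_right (by omega)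

theorem shiftedPairSection_monotone (hn : 0 < n) : Monotone (shiftedPairSection hn) :=
  fun i j hij => by
    rw [Fin.le_def] at hij ⊢
    exact Nat.sub_le_sub_right (by omega) 1

theorem leftInverse_shiftedPairIndex_shiftedPairSection (hn : 0 < n) :
    LeftInverse (shiftedPairIndex n) (shiftedPairSection hn) := fun i => by
  ext
  simp only [shiftedPairIndex, shiftedPairSection]
  omega

theorem ker_shiftedPairIndex : Setoid.ker (shiftedPairIndex n) = shiftedPairMatching (2 * n) := by
  ext x y
  rw [Setoid.ker_def, shiftedPairMatching_rel, Fin.ext_iff]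
  rfl

end ShiftedPairBlocks

/-- For an interval partition `π` of `[2r]` and the standard pair matching
`ρ = {(1,2),(3,4),…}` (here `Setoid.ker (·/2)` in 0-indexing), `π ⊔ ρ = ⊤` iff `π`
refines... more precisely iff `π` lies above `σ = {(1),(2,3),(4,5),…,(2r)}`
(here `Setoid.ker ((·+1)/2)`); consequently the set of such `π` is the interval
`[σ, ⊤]`, which is lattice isomorphic to the interval partitions of `[r+1]`. -/
theorem stmt4 {r : ℕ} (hr : 0 < r) :
    (∀ π : Setoid (Fin (2 * r)), IsIntervalSetoid π →
      (π ⊔ Setoid.ker (fun x : Fin (2 * r) => x.val / 2) = ⊤ ↔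
        Setoid.ker (fun x : Fin (2 * r) => (x.val + 1) / 2) ≤ π)) ∧
    Nonempty
      ({π : Setoid (Fin (2 * r)) //
          IsIntervalSetoid π ∧ π ⊔ Setoid.ker (fun x : Fin (2 * r) => x.val / 2) = ⊤} ≃o
        {τ : Setoid (Fin (r + 1)) // IsIntervalSetoid τ}) := by
  have hjoin : ∀ π : Setoid (Fin (2 * r)), IsIntervalSetoid π →
      (π ⊔ pairMatching (2 * r) = ⊤ ↔ shiftedPairMatching (2 * r) ≤ π) :=
    fun _ hπ => hπ.sup_pairMatching_eq_top_iff
  have hset : {π | IsIntervalSetoid π ∧ π ⊔ pairMatching (2 * r) = ⊤} =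
      {π | IsIntervalSetoid π ∧ Setoid.ker (shiftedPairIndex r) ≤ π} := by
    ext π
    rw [ker_shiftedPairIndex]
    exact and_congr_right (hjoin π)
  exact ⟨hjoin, ⟨(OrderIso.setCongr _ _ hset).trans <| intervalSetoidOrderIsoOfLeftInverse
    (shiftedPairSection_monotone hr) shiftedPairIndex_monotone
    (leftInverse_shiftedPairIndex_shiftedPairSection hr)⟩⟩
end

section
/- The number of interval partitions π of {1,…,2r} such that π ∨ 1̂₂^r = 1̂_{2r} (where 1̂₂^r is the standard pair matching) equals 2^r, the number of interval partitions of {1,…,r+1}. -/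
open Finset

namespace Setoid

variable {n : ℕ}

def links (π : Setoid (Fin n)) : Set ℕ :=
  {k | ∃ h : k + 1 < n, π ⟨k, by omega⟩ ⟨k + 1, h⟩}

def ofLinks (n : ℕ) (s : Set ℕ) : Setoid (Fin n) where
  r a b := Set.Ico (min a.val b.val) (max a.val b.val) ⊆ s
  iseqv :=
    { refl _ := by simp
      symm h := by rwa [min_comm, max_comm]
      trans {a b c} hab hbc k hk := by
        simp only [Set.mem_Ico] at hk
        by_cases hb : min a.val b.val ≤ k ∧ k < max a.val b.val
        · exact hab hb
        · exact hbc (by simp only [Set.mem_Ico]; omega) }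

theorem links_subset (π : Setoid (Fin n)) : π.links ⊆ {k | k + 1 < n} :=
  fun _ ⟨h, _⟩ => h

theorem links_mono {π σ : Setoid (Fin n)} (h : π ≤ σ) : π.links ⊆ σ.links :=
  fun _ ⟨hk, hπ⟩ => ⟨hk, h hπ⟩

theorem links_ofLinks (s : Set ℕ) : (ofLinks n s).links = {k | k + 1 < n ∧ k ∈ s} := by
  ext k
  refine ⟨fun ⟨hk, h⟩ => ⟨hk, h (by simp)⟩,
    fun ⟨hk, hs⟩ => ⟨hk, fun j hj => ?_⟩⟩
  obtain rfl : j = k := by simp only [Set.mem_Ico] at hj; omega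
  exact hs

theorem isIntervalSetoid_ofLinks (s : Set ℕ) : IsIntervalSetoid (ofLinks n s) := by
  intro a b c hab hbc h k hk
  simp only [Set.mem_Ico] at hk
  exact h (by simp only [Set.mem_Ico]; omega)

theorem rel_of_forall_mem_links (σ : Setoid (Fin n)) {a b : Fin n} (hab : a ≤ b)
    (h : ∀ k, a.val ≤ k → k < b.val → k ∈ σ.links) : σ a b := by
  suffices key : ∀ m, a.val ≤ m → ∀ hm : m < n,
      (∀ k, a.val ≤ k → k < m → k ∈ σ.links) → σ a ⟨m, hm⟩ from
    key b hab b.isLt h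
  intro m ham
  induction m, ham using Nat.le_induction with
  | base => exact fun _ _ => σ.refl' a
  | succ m ham ih =>
    exact fun hm h =>
      σ.trans' (ih (by omega) fun k h1 h2 => h k h1 (by omega)) (h m ham (by omega)).2

theorem eq_top_of_links (σ : Setoid (Fin n)) (h : ∀ k, k + 1 < n → k ∈ σ.links) :
    σ = ⊤ := by
  refine eq_top_iff.2 fun a b => ?_
  have hσ : ∀ a b : Fin n, a ≤ b → σ a b := fun a b hab =>
    σ.rel_of_forall_mem_links hab fun k _ hk => h k (by omega)
  rcases le_total a b with hab | hba
  · exact hσ a b hab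
  · exact σ.symm' (hσ b a hba)

end Setoid

namespace IsIntervalSetoid

open Setoid

variable {n : ℕ} {π : Setoid (Fin n)}

theorem mem_links_of_rel (hπ : IsIntervalSetoid π) {a b : Fin n} (h : π a b) {k : ℕ}
    (hak : a.val ≤ k) (hkb : k < b.val) : k ∈ π.links := by
  have hk : k + 1 < n := by omega
  have hk1 : π a ⟨k + 1, hk⟩ := hπ a _ b (Fin.le_def.2 (by simp; omega)) (Fin.le_def.2 hkb) h
  have hk0 : π a ⟨k, by omega⟩ := hπ a _ _ (Fin.le_def.2 hak) (Fin.le_def.2 (by simp)) hk1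
  exact ⟨hk, π.trans' (π.symm' hk0) hk1⟩

theorem ofLinks_links (hπ : IsIntervalSetoid π) : ofLinks n π.links = π := by
  ext a b
  wlog hab : a ≤ b generalizing a b
  · rw [Setoid.comm' (ofLinks n _), Setoid.comm' π]
    exact this b a (le_of_not_ge hab)
  change Set.Ico (min a.val b.val) (max a.val b.val) ⊆ π.links ↔ π a b
  rw [min_eq_left (Fin.le_def.1 hab), max_eq_right (Fin.le_def.1 hab)]
  exact ⟨fun h => π.rel_of_forall_mem_links hab fun k h1 h2 => h ⟨h1, h2⟩,
    fun h k hk => hπ.mem_links_of_rel h hk.1 hk.2⟩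

theorem ext_links {σ : Setoid (Fin n)} (hπ : IsIntervalSetoid π) (hσ : IsIntervalSetoid σ)
    (h : π.links = σ.links) : π = σ := by
  rw [← hπ.ofLinks_links, ← hσ.ofLinks_links, h]

theorem le_ker_of_notMem_links (hπ : IsIntervalSetoid π) {k : ℕ} (hk : k ∉ π.links) :
    π ≤ Setoid.ker fun x : Fin n => decide (x.val ≤ k) := by
  intro a b hab
  rw [Setoid.ker_def, decide_eq_decide]
  by_contra hne
  rcases (show (a.val ≤ k ∧ k < b.val) ∨ (b.val ≤ k ∧ k < a.val) by omega) with h | h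
  · exact hk (hπ.mem_links_of_rel hab h.1 h.2)
  · exact hk (hπ.mem_links_of_rel (π.symm' hab) h.1 h.2)

theorem sup_ker_div_two_eq_top_iff (hπ : IsIntervalSetoid π) :
    π ⊔ Setoid.ker (fun x : Fin n => x.val / 2) = ⊤ ↔
      ∀ k, Odd k → k + 1 < n → k ∈ π.links := by
  constructor
  · intro htop k hodd hk
    by_contra hnot
    -- no pair `{2j, 2j+1}` straddles the odd gap `k`
    have hpairs :
        Setoid.ker (fun x : Fin n => x.val / 2) ≤ Setoid.ker fun x => decide (x.val ≤ k) := by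
      intro a b hab
      rw [Setoid.ker_def] at hab ⊢
      obtain ⟨j, rfl⟩ := hodd
      rw [decide_eq_decide]
      omega
    have hcut := htop ▸ sup_le (hπ.le_ker_of_notMem_links hnot) hpairs
    have := hcut (x := ⟨k, by omega⟩) (y := ⟨k + 1, hk⟩) trivial
    simp [Setoid.ker_def] at this
  · intro h
    refine Setoid.eq_top_of_links _ fun k hk => ?_
    rcases Nat.even_or_odd k with ⟨j, rfl⟩ | hodd
    · exact links_mono le_sup_right ⟨hk, by rw [Setoid.ker_def]; simp only; omega⟩
    · exact links_mono le_sup_left (h k hodd hk)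

end IsIntervalSetoid

theorem ncard_eq_two_pow_of_bijOn_powerset_range {α : Type*} {f : Finset ℕ → α} {S : Set α}
    {m : ℕ} (h : Set.BijOn f ↑(range m).powerset S) : S.ncard = 2 ^ m := by
  rw [← h.image_eq, h.injOn.ncard_image, Set.ncard_coe_finset, card_powerset, card_range]

open Setoid

theorem bijOn_ofLinks (n : ℕ) :
    Set.BijOn (fun T : Finset ℕ => ofLinks n ↑T) ↑(range (n - 1)).powerset
      {π | IsIntervalSetoid π} := by
  classical
  have links_eq {T : Finset ℕ} (hT : T ∈ (range (n - 1)).powerset) :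
      (ofLinks n ↑T).links = T := by
    rw [links_ofLinks]
    ext k
    exact ⟨And.right, fun hk => ⟨by have := mem_range.1 (mem_powerset.1 hT hk); omega, hk⟩⟩
  refine ⟨fun T _ => isIntervalSetoid_ofLinks _, fun T hT T' hT' h => ?_, fun π hπ => ?_⟩
  · simpa only [links_eq hT, links_eq hT', coe_inj] using congrArg links h
  · have hT : (range (n - 1)).filter (· ∈ π.links) ∈ (range (n - 1)).powerset :=
      mem_powerset.2 (filter_subset _ _)
    refine ⟨_, hT, (isIntervalSetoid_ofLinks _).ext_links hπ ?_⟩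
    rw [links_eq hT]
    ext k
    simp only [coe_filter, mem_range, Set.mem_ofPred_eq]
    exact ⟨And.right, fun h => ⟨by have : k + 1 < n := π.links_subset h; omega, h⟩⟩

theorem ncard_isIntervalSetoid (n : ℕ) :
    {π : Setoid (Fin n) | IsIntervalSetoid π}.ncard = 2 ^ (n - 1) :=
  ncard_eq_two_pow_of_bijOn_powerset_range (bijOn_ofLinks n)

theorem bijOn_ofLinks_odd_or_half_mem (r : ℕ) :
    Set.BijOn (fun T : Finset ℕ => ofLinks (2 * r) {k | Odd k ∨ k / 2 ∈ T})
      ↑(range r).powerset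
      {π | IsIntervalSetoid π ∧ π ⊔ Setoid.ker (fun x : Fin _ => x.val / 2) = ⊤} := by
  classical
  refine ⟨fun T _ => ?_, fun T hT T' hT' h => ?_, fun π ⟨hπ, htop⟩ => ?_⟩
  · refine ⟨isIntervalSetoid_ofLinks _, ?_⟩
    rw [(isIntervalSetoid_ofLinks _).sup_ker_div_two_eq_top_iff, links_ofLinks]
    exact fun k hk hkn => ⟨hkn, Or.inl hk⟩
  · have mem_iff {T : Finset ℕ} (hT : T ∈ (range r).powerset) (j : ℕ) :
        j ∈ T ↔ 2 * j ∈ (ofLinks (2 * r) {k | Odd k ∨ k / 2 ∈ T}).links := by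
      rw [links_ofLinks]
      simp only [Set.mem_ofPred_eq, Nat.not_odd_iff_even.2 (even_two_mul j), false_or,
        Nat.mul_div_cancel_left j two_pos]
      refine ⟨fun hj => ⟨?_, hj⟩, And.right⟩
      have := mem_range.1 (mem_powerset.1 hT hj)
      omega
    ext j
    beta_reduce at h
    rw [mem_iff hT, mem_iff hT', h]
  · have hT : (range r).filter (2 * · ∈ π.links) ∈ (range r).powerset :=
      mem_powerset.2 (filter_subset _ _)
    refine ⟨_, hT, (isIntervalSetoid_ofLinks _).ext_links hπ ?_⟩
    rw [links_ofLinks]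
    ext k
    simp only [mem_filter, mem_range, Set.mem_ofPred_eq]
    rcases Nat.even_or_odd' k with ⟨j, rfl | rfl⟩
    · simp only [Nat.not_odd_iff_even.2 (even_two_mul j), false_or,
        Nat.mul_div_cancel_left j two_pos]
      exact ⟨fun h => h.2.2, fun h =>
        have : 2 * j + 1 < 2 * r := π.links_subset h
        ⟨this, by omega, h⟩⟩
    · have hodd : Odd (2 * j + 1) := odd_two_mul_add_one j
      exact ⟨fun h => hπ.sup_ker_div_two_eq_top_iff.1 htop _ hodd h.1,
        fun h => ⟨π.links_subset h, Or.inl hodd⟩⟩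

theorem stmt5_general (r : ℕ) :
    {π : Setoid (Fin (2 * r)) |
        IsIntervalSetoid π ∧
          π ⊔ Setoid.ker (fun x : Fin (2 * r) => x.val / 2) = ⊤}.ncard = 2 ^ r ∧
    {τ : Setoid (Fin (r + 1)) | IsIntervalSetoid τ}.ncard = 2 ^ r :=
  ⟨ncard_eq_two_pow_of_bijOn_powerset_range (bijOn_ofLinks_odd_or_half_mem r),
    ncard_isIntervalSetoid (r + 1)⟩

/-- The number of interval partitions `π` of `[2r]` with `π ⊔ 1̂₂ʳ = 1̂₂ᵣ`
(where `1̂₂ʳ` is the standard pair matching, `Setoid.ker (·/2)` in 0-indexing)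
is `2ʳ`, which is also the number of interval partitions of `[r+1]`. -/
theorem stmt5 (r : ℕ) (hr : 0 < r) :
    {π : Setoid (Fin (2 * r)) |
        IsIntervalSetoid π ∧
          π ⊔ Setoid.ker (fun x : Fin (2 * r) => x.val / 2) = ⊤}.ncard = 2 ^ r ∧
    {τ : Setoid (Fin (r + 1)) | IsIntervalSetoid τ}.ncard = 2 ^ r :=
  stmt5_general r
end

section
/- Let F(z) be a formal power series with F(0)=1, a ∈ ℝ, and define G(z) = F(z)/(1 − a z F(z)). If F is the moment generating function of a matrix B with respect to a state given by a rank-one projection P (i.e., F(z) = Σ_m Tr(P B^m) z^m with the factorization property Tr(P B^{l_1} P ⋯ P B^{l_r}) = Π Tr(P B^{l_i})), then the moment generating function of aP + B with respect to the same state is G, i.e., Σ_m Tr(P (aP + B)^m) z^m = F(z)/(1 − a z F(z)). -/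
open Finset Matrix PowerSeries

/-! The key is the noncommutative telescoping identity
`A^(m+1) = B^(m+1) + Σ_{i+k=m} A^i (A - B) B^k` with `A - B = aP`. Sandwiched between
copies of `P`, each term collapses by `P A^i P = Tr(P A^i) P`, so the moments
`g_m = Tr(P A^m)`, `f_m = Tr(P B^m)` satisfy `g_{m+1} = f_{m+1} + a Σ_{i+k=m} g_i f_k`,
which is the coefficientwise form of `G = F + a z G F`. -/

theorem pow_succ_eq_pow_succ_add_sum_antidiagonal {R : Type*} [Ring R] (x y : R) (m : ℕ) :
    x ^ (m + 1) = y ^ (m + 1) +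
      ∑ p ∈ antidiagonal m, x ^ p.1 * (x - y) * y ^ p.2 := by
  induction m with
  | zero => simp
  | succ m ih =>
    calc x ^ (m + 2) = x ^ (m + 1) * (x - y) + x ^ (m + 1) * y := by
          rw [← mul_add, sub_add_cancel, pow_succ]
      _ = x ^ (m + 1) * (x - y) +
            (y ^ (m + 1) + ∑ p ∈ antidiagonal m, x ^ p.1 * (x - y) * y ^ p.2) * y := by
          rw [← ih]
      _ = _ := by
          rw [add_mul, Finset.sum_mul, Nat.sum_antidiagonal_succ']
          simp only [pow_succ, pow_zero, mul_one, mul_assoc]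
          abel

theorem PowerSeries.mk_mul_one_sub_C_mul_X_mul_mk {R : Type*} [CommRing R] (f g : ℕ → R)
    (c : R) (h₀ : g 0 = f 0)
    (hsucc : ∀ m, g (m + 1) = f (m + 1) + c * ∑ p ∈ antidiagonal m, g p.1 * f p.2) :
    mk g * (1 - C c * X * mk f) = mk f := by
  suffices mk g = mk f + C c * X * (mk g * mk f) by linear_combination this
  ext (_ | m)
  · simp [h₀]
  · rw [map_add, mul_assoc, coeff_C_mul, coeff_succ_X_mul, coeff_mul]
    simp [hsucc]

namespace Matrix

variable {n : Type*} [Fintype n] [DecidableEq n] {R : Type*} [CommRing R]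

theorem trace_mul_smul_add_pow_succ {P : Matrix n n R}
    (hP : ∀ M : Matrix n n R, P * M * P = trace (P * M) • P) (B : Matrix n n R) (c : R)
    (m : ℕ) :
    trace (P * (c • P + B) ^ (m + 1)) = trace (P * B ^ (m + 1)) +
      c * ∑ p ∈ antidiagonal m, trace (P * (c • P + B) ^ p.1) * trace (P * B ^ p.2) := by
  have hterm : ∀ i k, P * ((c • P + B) ^ i * (c • P + B - B) * B ^ k) =
      (c * trace (P * (c • P + B) ^ i)) • (P * B ^ k) := by
    intro i k
    rw [add_sub_cancel_right, ← mul_assoc, ← mul_assoc, mul_smul_comm, hP, smul_mul_assoc,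
      smul_mul_assoc, smul_smul]
  rw [pow_succ_eq_pow_succ_add_sum_antidiagonal _ B, mul_add, Finset.mul_sum,
    trace_add, trace_sum, Finset.mul_sum]
  simp_rw [hterm]
  simp only [trace_smul, smul_eq_mul, mul_assoc]

end Matrix

theorem stmt10_general {n : ℕ} (P B : Matrix (Fin n) (Fin n) ℂ) (a : ℝ)
    (hRank1 : ∀ M : Matrix (Fin n) (Fin n) ℂ, P * M * P = Matrix.trace (P * M) • P) :
    (PowerSeries.mk fun m => Matrix.trace (P * ((a : ℂ) • P + B) ^ m)) *
        (1 - PowerSeries.C (a : ℂ) * PowerSeries.X *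
          PowerSeries.mk fun m => Matrix.trace (P * B ^ m)) =
      PowerSeries.mk fun m => Matrix.trace (P * B ^ m) :=
  mk_mul_one_sub_C_mul_X_mul_mk _ _ _ (by simp) (trace_mul_smul_add_pow_succ hRank1 B a)

/-- If `P` is a rank-one projection (`Tr P = 1`, `P M P = Tr(PM)·P`) and
`F(z) = Σ Tr(P Bᵐ) zᵐ` is the moment generating function of `B` in the state
`Tr(P ·)`, then the moment generating function `G` of `aP + B` satisfies
`G(z)(1 − a z F(z)) = F(z)`, i.e. `G = F/(1 − a z F)`. -/
theorem stmt10 {n : ℕ} (P B : Matrix (Fin n) (Fin n) ℂ) (a : ℝ)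
    (hProj : P * P = P) (hTrP : Matrix.trace P = 1)
    (hRank1 : ∀ M : Matrix (Fin n) (Fin n) ℂ, P * M * P = Matrix.trace (P * M) • P) :
    (PowerSeries.mk fun m => Matrix.trace (P * ((a : ℂ) • P + B) ^ m)) *
        (1 - PowerSeries.C (a : ℂ) * PowerSeries.X *
          PowerSeries.mk fun m => Matrix.trace (P * B ^ m)) =
      PowerSeries.mk fun m => Matrix.trace (P * B ^ m) :=
  stmt10_general P B a hRank1
end

section
/- Let x ∈ ℝ, x ≠ 0, satisfy 2/x = tan(1/x). Then the limit as ε → 0⁺ of iε·G(x+iε), where G(z) = 1/(2z − z²tan(1/z)), equals x²/(4 − x²). Moreover for x = 0 the corresponding limit equals 1/2. -/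
/-!
The denominator `D(z) = 2z − z² tan(1/z)` of `G` vanishes at every root `w ≠ 0` of
`tan(1/w) = 2/w`, and there `D'(w) = 2 − 2w tan(1/w) + sec²(1/w) = (4 − w²)/w²` because
`sec² = 1 + tan²`. Hence `(z − w) G(z) → w²/(4 − w²)` as `z → w`, in particular along `z = x + iε`;
`x² ≠ 4` since `tan(1/2) < 1`. At `0`, `tan(1/(iε)) = −i tanh(1/ε)` is bounded, so
`iε G(iε) = 1/(2 − iε tan(1/(iε))) → 1/2`.
-/

open Filter Topology Complex

theorem tendsto_sub_mul_inv_of_hasDerivAt {𝕜 : Type*} [NontriviallyNormedField 𝕜]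
    {f : 𝕜 → 𝕜} {f' a : 𝕜} (hf : HasDerivAt f f' a) (hfa : f a = 0) (hf' : f' ≠ 0) :
    Tendsto (fun z => (z - a) * (f z)⁻¹) (𝓝[≠] a) (𝓝 f'⁻¹) := by
  refine ((hasDerivAt_iff_tendsto_slope.mp hf).inv₀ hf').congr fun z => ?_
  rw [slope_def_field, hfa, sub_zero, inv_div, div_eq_mul_inv]

theorem tendsto_add_I_mul_nhdsNE (z : ℂ) :
    Tendsto (fun ε : ℝ => z + I * ε) (𝓝[>] 0) (𝓝[≠] z) := by
  refine tendsto_nhdsWithin_iff.mpr ⟨?_, ?_⟩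
  · refine tendsto_nhdsWithin_of_tendsto_nhds ?_
    simpa using ((continuous_ofReal.const_mul I).const_add z).tendsto 0
  · filter_upwards [self_mem_nhdsWithin] with ε (hε : 0 < ε)
    simpa using hε.ne'

theorem Real.sq_ne_four_of_tan_one_div_eq {x : ℝ} (h : Real.tan (1 / x) = 2 / x) : x ^ 2 ≠ 4 := by
  have htan : Real.tan (1 / 2) < Real.tan (Real.pi / 4) :=
    Real.tan_lt_tan_of_nonneg_of_lt_pi_div_two (by norm_num) (by linarith [Real.pi_pos])
      (by linarith [Real.pi_gt_three])
  rw [Real.tan_pi_div_four] at htan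
  intro hx
  rcases sq_eq_sq_iff_eq_or_eq_neg.mp (hx.trans (by norm_num : (4:ℝ) = 2 ^ 2)) with rfl | rfl
  · norm_num at h
    linarith
  · rw [show (1:ℝ) / -2 = -(1 / 2) by norm_num, Real.tan_neg] at h
    norm_num at h
    linarith

namespace BooleanTangent

noncomputable def denom (z : ℂ) : ℂ := 2 * z - z ^ 2 * tan (1 / z)

theorem hasDerivAt_denom {z : ℂ} (hz : z ≠ 0) (hcos : cos (1 / z) ≠ 0) :
    HasDerivAt denom (2 - 2 * z * tan (1 / z) + 1 / cos (1 / z) ^ 2) z := by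
  have hinv : HasDerivAt (fun z : ℂ => 1 / z) (-(z ^ 2)⁻¹) z := by
    simpa only [one_div] using hasDerivAt_inv hz
  have htan := (hasDerivAt_tan hcos).comp z hinv
  refine (((hasDerivAt_id z).const_mul 2).sub ((hasDerivAt_pow 2 z).mul htan)).congr_deriv ?_
  simp only [Function.comp_apply]
  field_simp
  ring

variable {w : ℂ}

theorem cos_one_div_ne_zero (hw : w ≠ 0) (h : tan (1 / w) = 2 / w) : cos (1 / w) ≠ 0 := by
  intro hcos
  rw [tan_eq_sin_div_cos, hcos, div_zero] at h
  exact div_ne_zero two_ne_zero hw h.symm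

theorem denom_eq_zero (h : tan (1 / w) = 2 / w) : denom w = 0 := by
  rw [denom, h]
  grind

theorem hasDerivAt_denom_of_tan_eq (hw : w ≠ 0) (h : tan (1 / w) = 2 / w) :
    HasDerivAt denom ((4 - w ^ 2) / w ^ 2) w := by
  have hcos := cos_one_div_ne_zero hw h
  have hsec : 1 / cos (1 / w) ^ 2 = 1 + (2 / w) ^ 2 := by
    rw [one_div, ← inv_one_add_tan_sq hcos, inv_inv, h]
  convert hasDerivAt_denom hw hcos using 1
  rw [hsec, h]
  field_simp
  ring

theorem tendsto_sub_mul_inv_denom (hw : w ≠ 0) (h : tan (1 / w) = 2 / w) (h4 : w ^ 2 ≠ 4) :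
    Tendsto (fun z => (z - w) * (denom z)⁻¹) (𝓝[≠] w) (𝓝 (w ^ 2 / (4 - w ^ 2))) := by
  have hD' : (4 - w ^ 2) / w ^ 2 ≠ 0 :=
    div_ne_zero (sub_ne_zero.mpr (Ne.symm h4)) (pow_ne_zero 2 hw)
  simpa only [inv_div] using
    tendsto_sub_mul_inv_of_hasDerivAt (hasDerivAt_denom_of_tan_eq hw h) (denom_eq_zero h) hD'

theorem norm_tan_one_div_I_mul_le (ε : ℝ) : ‖tan (1 / (I * ε))‖ ≤ 1 := by
  have harg : 1 / (I * ε) = ((-ε⁻¹ : ℝ) : ℂ) * I := by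
    push_cast
    field_simp
    rw [I_sq]
    ring
  rw [harg, tan_mul_I, ← ofReal_tanh, norm_mul, norm_I, mul_one, norm_real, Real.norm_eq_abs]
  exact (Real.abs_tanh_lt_one _).le

theorem tendsto_I_mul_mul_inv_denom_I_mul :
    Tendsto (fun ε : ℝ => I * ε * (denom (I * ε))⁻¹) (𝓝[>] 0) (𝓝 (1 / 2)) := by
  have hsmall : Tendsto (fun ε : ℝ => I * ε * tan (1 / (I * ε))) (𝓝[>] 0) (𝓝 0) := by
    refine Tendsto.zero_mul_isBoundedUnder_le ?_ ⟨1, eventually_map.mpr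
      (Eventually.of_forall norm_tan_one_div_I_mul_le)⟩
    refine tendsto_nhdsWithin_of_tendsto_nhds ?_
    simpa using (continuous_ofReal.const_mul I).tendsto 0
  have hlim := (tendsto_const_nhds (x := (2 : ℂ))).sub hsmall
  rw [sub_zero] at hlim
  rw [one_div]
  refine (hlim.inv₀ two_ne_zero).congr' ?_
  filter_upwards [self_mem_nhdsWithin] with ε (hε : 0 < ε)
  have hz : I * (ε : ℂ) ≠ 0 := mul_ne_zero I_ne_zero (ofReal_ne_zero.mpr hε.ne')
  rw [denom, show 2 * (I * ε) - (I * ε) ^ 2 * tan (1 / (I * ε)) =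
    I * ε * (2 - I * ε * tan (1 / (I * ε))) by ring, mul_inv, ← mul_assoc, mul_inv_cancel₀ hz,
    one_mul]

end BooleanTangent

/-- Atoms of the Boolean tangent law: with `G(z) = 1/(2z − z² tan(1/z))`, for every real
root `x ≠ 0` of `2/x = tan(1/x)` one has `lim_{ε→0⁺} iε G(x+iε) = x²/(4−x²)`, and at
`x = 0` the corresponding limit is `1/2`. -/
theorem stmt16 :
    (∀ x : ℝ, x ≠ 0 → Real.tan (1 / x) = 2 / x →
      Tendsto
        (fun ε : ℝ =>
          Complex.I * (ε : ℂ) *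
            (2 * ((x : ℂ) + Complex.I * ε) -
                ((x : ℂ) + Complex.I * ε) ^ 2 *
                  Complex.tan (1 / ((x : ℂ) + Complex.I * ε)))⁻¹)
        (nhdsWithin 0 (Set.Ioi 0))
        (nhds ((x ^ 2 / (4 - x ^ 2) : ℝ) : ℂ))) ∧
    Tendsto
      (fun ε : ℝ =>
        Complex.I * (ε : ℂ) *
          (2 * (Complex.I * ε) -
              (Complex.I * ε) ^ 2 * Complex.tan (1 / (Complex.I * ε)))⁻¹)
      (nhdsWithin 0 (Set.Ioi 0)) (nhds (1 / 2)) := by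
  refine ⟨fun x hx ht => ?_, BooleanTangent.tendsto_I_mul_mul_inv_denom_I_mul⟩
  have htC : tan (1 / (x : ℂ)) = 2 / x := by exact_mod_cast congrArg ofReal ht
  have h4 : (x : ℂ) ^ 2 ≠ 4 := by exact_mod_cast Real.sq_ne_four_of_tan_one_div_eq ht
  have h := (BooleanTangent.tendsto_sub_mul_inv_denom (ofReal_ne_zero.mpr hx) htC h4).comp
    (tendsto_add_I_mul_nhdsNE x)
  push_cast
  simpa only [Function.comp_def, add_sub_cancel_left, BooleanTangent.denom] using h
end
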